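/- Let γ > 1 and c_v > 0. The function η(τ, w, E) = c_v·((1−γ)·ln τ − ln(E − w²/2)) is strictly convex on the open convex set D = {(τ, w, E) ∈ ℝ³ : τ > 0 and E − w²/2 > 0}. (In particular, D is convex, and η is the mathematical entropy η = −S, up to an additive constant, of the polytropic ideal γ-law gas written in the conserved variables (τ, w, E), where E = w²/2 + ℰ is the total energy and ℰ the internal energy.) -/

import Mathlib

/-! `η = -S` with `S = c_v((γ-1) ln τ + ln ℰ)` and `ℰ = E - w²/2`. The internal energy `ℰ` is
concave: along a chord it exceeds the affine interpolation by `a b (w₁ - w₂)² / 2`. As `ln` is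
strictly concave and strictly increasing, `ln τ` and `ln ℰ` both lie above their chords, and for
distinct states one of the two inequalities is strict: either `τ` differs, or `w` differs (so `ℰ` is
strictly above its chord), or only `E` differs (so the two values of `ℰ` differ). -/

open MeasureTheory Filter

noncomputable section

abbrev E3 := EuclideanSpace ℝ (Fin 3)

/-- The physical domain `{(τ,w,E) : τ > 0 and E - w²/2 > 0}`. -/
def posDomain3 : Set E3 := {u | 0 < u 0 ∧ 0 < u 2 - (u 1)^2 / 2}

/-- The mathematical entropy `η = c_v((1-γ)ln τ - ln(E - w²/2))` of the γ-law gas in the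
conserved variables `(τ, w, E)`. -/
def etaEuler (γ cv : ℝ) (u : E3) : ℝ :=
  cv * ((1 - γ) * Real.log (u 0) - Real.log (u 2 - (u 1)^2 / 2))

open Real Set

section CompChord

variable {E : Type*} [AddCommGroup E] [Module ℝ E] {s : Set E} {t : Set ℝ} {f : E → ℝ}
  {g : ℝ → ℝ} {x y : E} {a b : ℝ}

theorem ConcaveOn.smul_comp_add_smul_comp_le (hg : ConcaveOn ℝ t g) (hg' : MonotoneOn g t)
    (hf : ConcaveOn ℝ s f) (hfst : MapsTo f s t) (hx : x ∈ s) (hy : y ∈ s) (ha : 0 ≤ a)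
    (hb : 0 ≤ b) (hab : a + b = 1) :
    a • g (f x) + b • g (f y) ≤ g (f (a • x + b • y)) :=
  (hg.2 (hfst hx) (hfst hy) ha hb hab).trans <|
    hg' (hg.1 (hfst hx) (hfst hy) ha hb hab) (hfst (hf.1 hx hy ha hb hab)) (hf.2 hx hy ha hb hab)

theorem StrictConcaveOn.smul_comp_add_smul_comp_lt (hg : StrictConcaveOn ℝ t g)
    (hg' : StrictMonoOn g t) (hf : ConcaveOn ℝ s f) (hfst : MapsTo f s t) (hx : x ∈ s)
    (hy : y ∈ s) (ha : 0 < a) (hb : 0 < b) (hab : a + b = 1)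
    (h : f x ≠ f y ∨ a • f x + b • f y < f (a • x + b • y)) :
    a • g (f x) + b • g (f y) < g (f (a • x + b • y)) := by
  have hmem : a • f x + b • f y ∈ t := hg.1 (hfst hx) (hfst hy) ha.le hb.le hab
  have hmix : f (a • x + b • y) ∈ t := hfst (hf.1 hx hy ha.le hb.le hab)
  rcases h with hne | hlt
  · exact (hg.2 (hfst hx) (hfst hy) hne ha hb hab).trans_le <|
      hg'.monotoneOn hmem hmix (hf.2 hx hy ha.le hb.le hab)
  · exact (hg.concaveOn.2 (hfst hx) (hfst hy) ha.le hb.le hab).trans_lt (hg' hmem hmix hlt)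

end CompChord

def internalEnergy (u : E3) : ℝ := u 2 - u 1 ^ 2 / 2

def entropy (γ cv : ℝ) (u : E3) : ℝ := cv * ((γ - 1) * log (u 0) + log (internalEnergy u))

theorem etaEuler_eq_neg_entropy (γ cv : ℝ) : etaEuler γ cv = -entropy γ cv := by
  ext u
  simp only [etaEuler, entropy, internalEnergy, Pi.neg_apply]
  ring

theorem internalEnergy_add_smul {a b : ℝ} (hab : a + b = 1) (u v : E3) :
    internalEnergy (a • u + b • v) =
      a * internalEnergy u + b * internalEnergy v + a * b * (u 1 - v 1) ^ 2 / 2 := by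
  obtain rfl : b = 1 - a := by linarith
  simp only [internalEnergy, PiLp.add_apply, PiLp.smul_apply, smul_eq_mul]
  ring

theorem concaveOn_internalEnergy : ConcaveOn ℝ univ internalEnergy := by
  refine ⟨convex_univ, fun u _ v _ a b ha hb hab => ?_⟩
  rw [internalEnergy_add_smul hab, smul_eq_mul, smul_eq_mul]
  have : 0 ≤ a * b * (u 1 - v 1) ^ 2 / 2 := by positivity
  linarith

theorem internalEnergy_add_smul_gt {a b : ℝ} (ha : 0 < a) (hb : 0 < b) (hab : a + b = 1)
    {u v : E3} (h : u 1 ≠ v 1) :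
    a • internalEnergy u + b • internalEnergy v < internalEnergy (a • u + b • v) := by
  rw [internalEnergy_add_smul hab, smul_eq_mul, smul_eq_mul]
  have : 0 < a * b * (u 1 - v 1) ^ 2 / 2 := by
    have := sub_ne_zero_of_ne h
    positivity
  linarith

theorem eq_of_internalEnergy_eq {u v : E3} (h0 : u 0 = v 0) (h1 : u 1 = v 1)
    (he : internalEnergy u = internalEnergy v) : u = v := by
  have h2 : u 2 = v 2 := by
    simp only [internalEnergy, h1] at he
    linarith
  ext i
  fin_cases i <;> assumption

theorem posDomain3_eq : posDomain3 = {u | 0 < u 0} ∩ {u ∈ univ | 0 < internalEnergy u} := by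
  ext u
  simp [posDomain3, internalEnergy]

theorem convex_posDomain3 : Convex ℝ posDomain3 := by
  rw [posDomain3_eq]
  exact (convex_halfSpace_gt (EuclideanSpace.proj (0 : Fin 3)).isLinear 0).inter
    (concaveOn_internalEnergy.convex_gt 0)

theorem strictConcaveOn_entropy {γ cv : ℝ} (hγ : 1 < γ) (hcv : 0 < cv) :
    StrictConcaveOn ℝ posDomain3 (entropy γ cv) := by
  refine ⟨convex_posDomain3, fun u hu v hv huv a b ha hb hab => ?_⟩
  have hτ : ConcaveOn ℝ posDomain3 fun w : E3 => w 0 :=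
    (EuclideanSpace.proj (0 : Fin 3) : E3 →L[ℝ] ℝ).toLinearMap.concaveOn convex_posDomain3
  have hτ_pos : MapsTo (fun w : E3 => w 0) posDomain3 (Ioi 0) := fun w hw => hw.1
  have he : ConcaveOn ℝ posDomain3 internalEnergy :=
    concaveOn_internalEnergy.subset (subset_univ _) convex_posDomain3
  have he_pos : MapsTo internalEnergy posDomain3 (Ioi 0) := fun w hw => by
    simpa [internalEnergy] using hw.2
  have hlog := strictConcaveOn_log_Ioi
  have hlog' : StrictMonoOn log (Ioi 0) := strictMonoOn_log
  have hτ_le := hlog.concaveOn.smul_comp_add_smul_comp_le hlog'.monotoneOn hτ hτ_pos hu hv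
    ha.le hb.le hab
  have he_le := hlog.concaveOn.smul_comp_add_smul_comp_le hlog'.monotoneOn he he_pos hu hv
    ha.le hb.le hab
  have hstrict : a • log (u 0) + b • log (v 0) < log ((a • u + b • v) 0) ∨
      a • log (internalEnergy u) + b • log (internalEnergy v)
        < log (internalEnergy (a • u + b • v)) := by
    by_cases h0 : u 0 = v 0
    · refine .inr (hlog.smul_comp_add_smul_comp_lt hlog' he he_pos hu hv ha hb hab ?_)
      by_cases h1 : u 1 = v 1
      · exact .inl fun heq => huv (eq_of_internalEnergy_eq h0 h1 heq)
      · exact .inr (internalEnergy_add_smul_gt ha hb hab h1)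
    · exact .inl (hlog.smul_comp_add_smul_comp_lt hlog' hτ hτ_pos hu hv ha hb hab (.inl h0))
  simp only [entropy, smul_eq_mul] at hτ_le he_le hstrict ⊢
  rcases hstrict with h | h
  · linear_combination (cv * (γ - 1)) * h + cv * he_le
  · linear_combination (cv * (γ - 1)) * hτ_le + cv * h

/-- The domain `D = {τ > 0, E - w²/2 > 0}` is convex and the mathematical
entropy `η = -S` of the polytropic ideal γ-law gas is strictly convex on it. -/
theorem stmt10 (γ cv : ℝ) (hγ : 1 < γ) (hcv : 0 < cv) :
    Convex ℝ posDomain3 ∧ StrictConvexOn ℝ posDomain3 (etaEuler γ cv) := by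
  rw [etaEuler_eq_neg_entropy]
  exact ⟨convex_posDomain3, (strictConcaveOn_entropy hγ hcv).neg⟩
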